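/- arXiv:2602.01943 — 3 statements merged into one kernel-verified Lean document; each statement's English description precedes it below -/
import Mathlib

section
/- Let Ψ₀, Φ, Ψ be unit vectors in a complex inner product space, Θ := arccos|⟨Ψ₀,Ψ⟩|, and F[x,y] := |⟨x,y⟩|². Then |F[Φ,Ψ] − F[Φ,Ψ₀]| ≤ sinΘ. -/
/-!
Write `cos φ = |⟨Φ, Ψ₀⟩|`. Splitting `Φ` and `Ψ` into their components along `Ψ₀` and
orthogonal to it gives `|⟨Φ, Ψ⟩| ≤ cos Θ cos φ + sin Θ sin φ = cos (Θ - φ)`, hence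
`|⟨Φ, Ψ⟩|² - cos² φ ≤ cos² (Θ - φ) - cos² φ = sin Θ · sin (2φ - Θ) ≤ sin Θ`.
Exchanging `Ψ` and `Ψ₀` gives the other inequality.
-/

open scoped InnerProductSpace

section

variable {𝕜 E : Type*} [RCLike 𝕜] [NormedAddCommGroup E] [InnerProductSpace 𝕜 E] {u : E}

theorem norm_sub_inner_smul_sq (hu : ‖u‖ = 1) (x : E) :
    ‖x - ⟪u, x⟫_𝕜 • u‖ ^ 2 = ‖x‖ ^ 2 - ‖⟪u, x⟫_𝕜‖ ^ 2 := by
  rw [@norm_sub_sq 𝕜, inner_smul_right, ← inner_conj_symm, RCLike.conj_mul, norm_smul,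
    RCLike.norm_conj, hu, ← RCLike.ofReal_pow, RCLike.ofReal_re]
  ring

theorem inner_eq_inner_mul_inner_add_inner_sub_smul (hu : ‖u‖ = 1) (x y : E) :
    ⟪x, y⟫_𝕜 = ⟪x, u⟫_𝕜 * ⟪u, y⟫_𝕜 + ⟪x - ⟪u, x⟫_𝕜 • u, y - ⟪u, y⟫_𝕜 • u⟫_𝕜 := by
  simp only [inner_sub_left, inner_sub_right, inner_smul_left, inner_smul_right,
    inner_self_eq_one_of_norm_eq_one hu, inner_conj_symm]
  ring

theorem norm_inner_le_of_norm_eq_one {x y : E} (hu : ‖u‖ = 1) (hx : ‖x‖ = 1) (hy : ‖y‖ = 1) :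
    ‖⟪x, y⟫_𝕜‖ ≤ ‖⟪u, y⟫_𝕜‖ * ‖⟪u, x⟫_𝕜‖
      + √(1 - ‖⟪u, x⟫_𝕜‖ ^ 2) * √(1 - ‖⟪u, y⟫_𝕜‖ ^ 2) := by
  have norm_perp (z : E) (hz : ‖z‖ = 1) : ‖z - ⟪u, z⟫_𝕜 • u‖ = √(1 - ‖⟪u, z⟫_𝕜‖ ^ 2) := by
    rw [← Real.sqrt_sq (norm_nonneg (z - _)), norm_sub_inner_smul_sq hu, hz, one_pow]
  calc ‖⟪x, y⟫_𝕜‖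
      ≤ ‖⟪x, u⟫_𝕜 * ⟪u, y⟫_𝕜‖ + ‖⟪x - ⟪u, x⟫_𝕜 • u, y - ⟪u, y⟫_𝕜 • u⟫_𝕜‖ := by
        rw [inner_eq_inner_mul_inner_add_inner_sub_smul hu x y]
        exact norm_add_le _ _
    _ ≤ ‖⟪u, y⟫_𝕜‖ * ‖⟪u, x⟫_𝕜‖ + ‖x - ⟪u, x⟫_𝕜 • u‖ * ‖y - ⟪u, y⟫_𝕜 • u‖ := by
        rw [norm_mul, norm_inner_symm x u, mul_comm]
        gcongr
        exact norm_inner_le_norm _ _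
    _ = _ := by rw [norm_perp x hx, norm_perp y hy]

end

theorem sq_sub_sq_le_sqrt_one_sub_sq {a f t : ℝ} (ha : 0 ≤ a) (hf : f ∈ Set.Icc 0 1)
    (ht : t ∈ Set.Icc 0 1) (h : a ≤ t * f + √(1 - f ^ 2) * √(1 - t ^ 2)) :
    a ^ 2 - f ^ 2 ≤ √(1 - t ^ 2) := by
  obtain ⟨hf0, hf1⟩ := hf
  obtain ⟨ht0, ht1⟩ := ht
  set g := √(1 - f ^ 2)
  set s := √(1 - t ^ 2)
  have hg : g ^ 2 = 1 - f ^ 2 := Real.sq_sqrt (by nlinarith)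
  have hs : s ^ 2 = 1 - t ^ 2 := Real.sq_sqrt (by nlinarith)
  have hg0 : 0 ≤ g := Real.sqrt_nonneg _
  have hs0 : 0 ≤ s := Real.sqrt_nonneg _
  -- Cauchy–Schwarz for the unit vectors `(s, t)` and `(1 - 2f², 2fg)`
  have hcs : s * (1 - 2 * f ^ 2) + t * (2 * f * g) ≤ 1 := by
    nlinarith [sq_nonneg (s - (1 - 2 * f ^ 2)), sq_nonneg (t - 2 * f * g)]
  calc a ^ 2 - f ^ 2 ≤ (t * f + g * s) ^ 2 - f ^ 2 := by gcongr
    _ = s * (s * (1 - 2 * f ^ 2) + t * (2 * f * g)) := by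
        linear_combination f ^ 2 * hs + s ^ 2 * hg
    _ ≤ s := mul_le_of_le_one_right hs0 hcs

theorem norm_inner_sq_sub_norm_inner_sq_le {𝕜 E : Type*} [RCLike 𝕜] [NormedAddCommGroup E]
    [InnerProductSpace 𝕜 E] {x u v : E} (hx : ‖x‖ = 1) (hu : ‖u‖ = 1) (hv : ‖v‖ = 1) :
    ‖⟪x, v⟫_𝕜‖ ^ 2 - ‖⟪x, u⟫_𝕜‖ ^ 2 ≤ √(1 - ‖⟪u, v⟫_𝕜‖ ^ 2) := by
  have unit_inner_mem (y z : E) (hy : ‖y‖ = 1) (hz : ‖z‖ = 1) : ‖⟪y, z⟫_𝕜‖ ∈ Set.Icc 0 1 :=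
    ⟨norm_nonneg _, by simpa [hy, hz] using norm_inner_le_norm (𝕜 := 𝕜) y z⟩
  rw [norm_inner_symm x u]
  exact sq_sub_sq_le_sqrt_one_sub_sq (norm_nonneg _) (unit_inner_mem u x hu hx)
    (unit_inner_mem u v hu hv) (norm_inner_le_of_norm_eq_one hu hx hv)

theorem fidelity_bound_simple {E : Type*} [NormedAddCommGroup E] [InnerProductSpace ℂ E]
    (Ψ₀ Φ Ψ : E) (h₀ : ‖Ψ₀‖ = 1) (hΦ : ‖Φ‖ = 1) (hΨ : ‖Ψ‖ = 1) :
    |‖(inner ℂ Φ Ψ : ℂ)‖ ^ 2 - ‖(inner ℂ Φ Ψ₀ : ℂ)‖ ^ 2|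
      ≤ Real.sin (Real.arccos ‖(inner ℂ Ψ₀ Ψ : ℂ)‖) := by
  rw [Real.sin_arccos, abs_sub_le_iff]
  refine ⟨norm_inner_sq_sub_norm_inner_sq_le hΦ h₀ hΨ, ?_⟩
  rw [norm_inner_symm Ψ₀ Ψ]
  exact norm_inner_sq_sub_norm_inner_sq_le hΦ hΨ h₀
end

section
/- Let H₀ be a Hermitian matrix with orthonormal eigenbasis |E_n⟩, eigenvalues E_n, and Gibbs weights p_n = e^{−βE_n}. For any Hermitian V with the eigenvalue nondegeneracy needed for first-order perturbation theory, the function S(λ) := Tr(ρ₀(β) σ_λ(β)), where σ_λ(β) = (1/Z₀(β))Σ_n p_n |E_n(λ)⟩⟨E_n(λ)| and |E_n(λ)⟩ are eigenvectors of H₀ + λV, satisfies S'(0) = 0 and S''(0) = −(1/Z₀(β)²) Σ_{m≠n} (p_m − p_n)² |⟨E_m|V|E_n⟩|² / (E_m − E_n)². -/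
/-!
Because the `v m` form an orthonormal basis, `∑ m, ‖⟪v m, w t n⟫‖² = 1`. Hence, up to the factor
`1 / Z²` and an additive constant, `S t = ∑ m n, c m n * ‖⟪v m, w t n⟫‖²` with
`c m n = -p n (p n - p m)`, which vanishes for `m = n`. For `m ≠ n` the overlap vanishes at `t = 0`,
so its squared norm has zero first derivative and second derivative `2 ‖⟪v m, w n⟫'(0)‖²`.
Projecting the eigenvalue equation onto `v m` gives `(ε t n - E m) ⟪v m, w t n⟫ = t ⟪v m, V w t n⟫`,
hence `⟪v m, w n⟫'(0) = V m n / (E n - E m)`. Symmetrising in `(m, n)` turns `2 p n (p n - p m)`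
into `(p m - p n)²`.
-/

open Matrix
open scoped RealInnerProductSpace

section NormSqDeriv

variable {F : Type*} [NormedAddCommGroup F] [InnerProductSpace ℝ F]
  {ι : Type*} [Fintype ι] (c : ι → ℝ) {f : ι → ℝ → F} {t₀ : ℝ}

theorem deriv_sum_mul_norm_sq (hf : ∀ i, Differentiable ℝ (f i)) :
    deriv (fun t => ∑ i, c i * ‖f i t‖ ^ 2) =
      fun t => ∑ i, c i * (2 * ⟪f i t, deriv (f i) t⟫) :=
  funext fun t =>
    (HasDerivAt.fun_sum fun i _ => ((hf i t).hasDerivAt.norm_sq).const_mul (c i)).deriv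

theorem deriv_sum_mul_norm_sq_eq_zero (hf : ∀ i, Differentiable ℝ (f i))
    (h₀ : ∀ i, c i = 0 ∨ f i t₀ = 0) :
    deriv (fun t => ∑ i, c i * ‖f i t‖ ^ 2) t₀ = 0 := by
  rw [deriv_sum_mul_norm_sq c hf]
  refine Finset.sum_eq_zero fun i _ => ?_
  rcases h₀ i with hc | hf₀ <;> simp [*]

theorem deriv_deriv_sum_mul_norm_sq (hf : ∀ i, ContDiff ℝ 2 (f i))
    (h₀ : ∀ i, c i = 0 ∨ f i t₀ = 0) :
    deriv (deriv (fun t => ∑ i, c i * ‖f i t‖ ^ 2)) t₀ =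
      2 * ∑ i, c i * ‖deriv (f i) t₀‖ ^ 2 := by
  rw [deriv_sum_mul_norm_sq c fun i => (hf i).differentiable two_ne_zero, Finset.mul_sum]
  have hterm : ∀ i, HasDerivAt (fun t => c i * (2 * ⟪f i t, deriv (f i) t⟫))
      (c i * (2 * (⟪f i t₀, deriv (deriv (f i)) t₀⟫ + ‖deriv (f i) t₀‖ ^ 2))) t₀ := fun i => by
    have hd := ((hf i).differentiable two_ne_zero t₀).hasDerivAt.inner ℝ
      ((hf i).differentiable_deriv_two t₀).hasDerivAt
    rw [real_inner_self_eq_norm_sq] at hd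
    exact (hd.const_mul 2).const_mul (c i)
  rw [(HasDerivAt.fun_sum fun i _ => hterm i).deriv]
  refine Finset.sum_congr rfl fun i _ => ?_
  rcases h₀ i with hc | hf₀
  · simp only [hc, zero_mul, mul_zero]
  · rw [hf₀, inner_zero_left, zero_add, mul_left_comm]

end NormSqDeriv

theorem HasDerivAt.smul_eq_of_smul_eq_sub_smul {𝕜 F : Type*} [NontriviallyNormedField 𝕜]
    [NormedAddCommGroup F] [NormedSpace 𝕜 F] {f h : 𝕜 → F} {e : 𝕜 → 𝕜} {f' : F} {x : 𝕜}
    (hf : HasDerivAt f f' x) (hfx : f x = 0) (he : ContinuousAt e x) (hh : ContinuousAt h x)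
    (heq : ∀ t, e t • f t = (t - x) • h t) : e x • f' = h x := by
  have hslope : ∀ t ≠ x, e t • slope f x t = h t := fun t ht => by
    rw [slope_def_module, hfx, sub_zero, smul_comm, heq, smul_smul,
      inv_mul_cancel₀ (sub_ne_zero.mpr ht), one_smul]
  refine tendsto_nhds_unique ((he.mono_left nhdsWithin_le_nhds).smul
    (hasDerivAt_iff_tendsto_slope.mp hf)) ?_
  refine (hh.mono_left nhdsWithin_le_nhds).congr' ?_
  filter_upwards [self_mem_nhdsWithin] with t ht using (hslope t ht).symm

theorem sum_norm_sq_star_dotProduct {𝕜 ι : Type*} [RCLike 𝕜] [Fintype ι] [DecidableEq ι]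
    {v : ι → ι → 𝕜} (hv : ∀ m n, star (v m) ⬝ᵥ v n = if m = n then 1 else 0) (x : ι → 𝕜) :
    ∑ m, ‖star (v m) ⬝ᵥ x‖ ^ 2 = RCLike.re (star x ⬝ᵥ x) := by
  set U : Matrix ι ι 𝕜 := Matrix.of fun m i => star (v m i)
  have hUU : Uᴴ * U = 1 := mul_eq_one_comm.mp <| by
    ext m n
    simpa [U, Matrix.mul_apply, Matrix.one_apply, dotProduct] using hv m n
  calc ∑ m, ‖star (v m) ⬝ᵥ x‖ ^ 2 = RCLike.re (star (U *ᵥ x) ⬝ᵥ (U *ᵥ x)) := by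
        simp only [dotProduct, Pi.star_apply, RCLike.star_def, RCLike.conj_mul, map_sum,
          ← RCLike.ofReal_pow, RCLike.ofReal_re]
        rfl
    _ = RCLike.re (star x ⬝ᵥ x) := by
        rw [star_mulVec, dotProduct_mulVec, vecMul_vecMul, hUU, vecMul_one]

theorem Matrix.IsHermitian.star_dotProduct_mulVec_of_mulVec_eq {𝕜 ι : Type*} [RCLike 𝕜]
    [Fintype ι] {H : Matrix ι ι 𝕜} (hH : H.IsHermitian) {u : ι → 𝕜} {μ : ℝ}
    (hu : H *ᵥ u = (μ : 𝕜) • u) (x : ι → 𝕜) :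
    star u ⬝ᵥ H *ᵥ x = μ * (star u ⬝ᵥ x) := by
  rw [dotProduct_mulVec, ← hH.eq, ← star_mulVec, hu, star_smul, RCLike.star_def,
    RCLike.conj_ofReal, smul_dotProduct, smul_eq_mul]

theorem Matrix.IsHermitian.star_star_dotProduct_mulVec {𝕜 ι : Type*} [RCLike 𝕜]
    [Fintype ι] {A : Matrix ι ι 𝕜} (hA : A.IsHermitian) (u x : ι → 𝕜) :
    star (star u ⬝ᵥ A *ᵥ x) = star x ⬝ᵥ A *ᵥ u := by
  rw [star_dotProduct, star_star, star_mulVec, hA.eq, ← dotProduct_mulVec]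

theorem continuous_eigenvalue_of_normalized {ι : Type*} [Fintype ι] {A : ℝ → Matrix ι ι ℂ}
    {w : ℝ → ι → ℂ} {ε : ℝ → ℝ} (hA : Continuous A) (hw : Continuous w)
    (hnorm : ∀ t, star (w t) ⬝ᵥ w t = 1) (heig : ∀ t, A t *ᵥ w t = (ε t : ℂ) • w t) :
    Continuous ε := by
  have hε : ε = fun t => (star (w t) ⬝ᵥ A t *ᵥ w t).re := funext fun t => by
    rw [heig, dotProduct_smul, hnorm, smul_eq_mul, mul_one, Complex.ofReal_re]
  rw [hε]
  fun_prop

theorem norm_sq_deriv_overlap_eq {ι : Type*} [Fintype ι] {H V : Matrix ι ι ℂ}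
    (hH : H.IsHermitian) {u : ι → ℂ} {μ : ℝ} (hu : H *ᵥ u = (μ : ℂ) • u)
    {w : ℝ → ι → ℂ} {ε : ℝ → ℝ} (hw : Differentiable ℝ w) (hnorm : ∀ t, star (w t) ⬝ᵥ w t = 1)
    (heig : ∀ t : ℝ, (H + (t : ℂ) • V) *ᵥ w t = (ε t : ℂ) • w t)
    (h₀ : star u ⬝ᵥ w 0 = 0) (hgap : μ ≠ ε 0) :
    ‖deriv (fun t => star u ⬝ᵥ w t) 0‖ ^ 2 = ‖star u ⬝ᵥ V *ᵥ w 0‖ ^ 2 / (μ - ε 0) ^ 2 := by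
  have hwc := hw.continuous
  have hε := continuous_eigenvalue_of_normalized (by fun_prop) hwc hnorm heig
  have hderiv : DifferentiableAt ℝ (fun t => star u ⬝ᵥ w t) 0 := by
    simp only [dotProduct]
    fun_prop
  have hsmul := hderiv.hasDerivAt.smul_eq_of_smul_eq_sub_smul (e := fun t => ε t - μ)
    (h := fun t => star u ⬝ᵥ V *ᵥ w t) h₀ (by fun_prop) (by fun_prop) fun t => by
      have h := congrArg (star u ⬝ᵥ ·) (heig t)
      simp only [add_mulVec, smul_mulVec, dotProduct_add, dotProduct_smul,
        hH.star_dotProduct_mulVec_of_mulVec_eq hu, smul_eq_mul] at h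
      rw [sub_zero, Complex.real_smul, Complex.real_smul, Complex.ofReal_sub]
      linear_combination -h
  have hgap' : ε 0 - μ ≠ 0 := sub_ne_zero.mpr hgap.symm
  rw [← hsmul, norm_smul, mul_pow, Real.norm_eq_abs, sq_abs, ← neg_sub, neg_sq]
  field_simp

section DoubleSums

variable {ι R : Type*} [Fintype ι] [CommRing R] (p : ι → R)

theorem sum_sum_mul_mul_eq_of_sum_eq_one {q : ι → ι → R} (hq : ∀ n, ∑ m, q m n = 1) :
    ∑ m, ∑ n, p m * p n * q m n =
      ∑ n, p n ^ 2 + ∑ m, ∑ n, -(p n * (p n - p m)) * q m n := by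
  have hsq : ∑ n, p n ^ 2 = ∑ m, ∑ n, p n ^ 2 * q m n := by
    rw [Finset.sum_comm]
    simp only [← Finset.mul_sum, hq, mul_one]
  rw [hsq, ← Finset.sum_add_distrib]
  refine Finset.sum_congr rfl fun m _ => ?_
  rw [← Finset.sum_add_distrib]
  exact Finset.sum_congr rfl fun n _ => by ring

theorem sum_sum_sub_sq_mul_of_symm {K : ι → ι → R} (hK : ∀ m n, K m n = K n m) :
    ∑ m, ∑ n, (p m - p n) ^ 2 * K m n = 2 * ∑ m, ∑ n, p n * (p n - p m) * K m n := by
  have hswap : ∑ m, ∑ n, p m ^ 2 * K m n = ∑ m, ∑ n, p n ^ 2 * K m n := by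
    rw [Finset.sum_comm]; simp only [hK]
  rw [← sub_eq_zero, Finset.mul_sum, ← Finset.sum_sub_distrib]
  simp_rw [Finset.mul_sum, ← Finset.sum_sub_distrib]
  calc ∑ m, ∑ n, ((p m - p n) ^ 2 * K m n - 2 * (p n * (p n - p m) * K m n))
      = ∑ m, ∑ n, p m ^ 2 * K m n - ∑ m, ∑ n, p n ^ 2 * K m n := by
        rw [← Finset.sum_sub_distrib]
        exact Finset.sum_congr rfl fun m _ => by
          rw [← Finset.sum_sub_distrib]; exact Finset.sum_congr rfl fun n _ => by ring
    _ = 0 := by rw [hswap, sub_self]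

end DoubleSums

theorem deriv_sum_sum_mul_mul_norm_sq {ι F : Type*} [Fintype ι] [NormedAddCommGroup F]
    [InnerProductSpace ℝ F] (A : ℝ) (p : ι → ℝ) {f : ι → ι → ℝ → F} {K : ι → ι → ℝ} {t₀ : ℝ}
    (hf : ∀ m n, ContDiff ℝ 2 (f m n)) (hunit : ∀ n t, ∑ m, ‖f m n t‖ ^ 2 = 1)
    (h₀ : ∀ m n, m ≠ n → f m n t₀ = 0) (hK : ∀ m n, K m n = K n m)
    (hderiv : ∀ m n, m ≠ n → ‖deriv (f m n) t₀‖ ^ 2 = K m n)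
    (S : ℝ → ℝ) (hS : ∀ t, S t = A * ∑ m, ∑ n, p m * p n * ‖f m n t‖ ^ 2) :
    deriv S t₀ = 0 ∧ deriv (deriv S) t₀ = -A * ∑ m, ∑ n, (p m - p n) ^ 2 * K m n := by
  set c : ι × ι → ℝ := fun i => -(p i.2 * (p i.2 - p i.1))
  have hc : ∀ i : ι × ι, c i = 0 ∨ f i.1 i.2 t₀ = 0 := by
    rintro ⟨m, n⟩
    rcases eq_or_ne m n with rfl | hmn
    · simp [c]
    · exact Or.inr (h₀ m n hmn)
  have hterm : ∀ m n, c (m, n) * ‖deriv (f m n) t₀‖ ^ 2 = -(p n * (p n - p m) * K m n) := by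
    intro m n
    rcases eq_or_ne m n with rfl | hmn
    · simp [c]
    · simp only [c, hderiv m n hmn]; ring
  have hS_eq : S = fun t => A * (∑ n, p n ^ 2 + ∑ i : ι × ι, c i * ‖f i.1 i.2 t‖ ^ 2) :=
    funext fun t => by
      rw [hS, sum_sum_mul_mul_eq_of_sum_eq_one p (hunit · t), Fintype.sum_prod_type]
  have hf' : ∀ i : ι × ι, ContDiff ℝ 2 (f i.1 i.2) := fun i => hf i.1 i.2
  rw [hS_eq, deriv_const_mul_field', deriv_const_add']
  beta_reduce
  refine ⟨by rw [deriv_sum_mul_norm_sq_eq_zero c (fun i => (hf' i).differentiable two_ne_zero) hc,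
    mul_zero], ?_⟩
  rw [deriv_const_mul_field']
  beta_reduce
  rw [deriv_deriv_sum_mul_norm_sq c hf' hc, Fintype.sum_prod_type]
  simp only [hterm, Finset.sum_neg_distrib, sum_sum_sub_sq_mul_of_symm p hK]
  ring

theorem thermal_overlap_perturbation_general {d : ℕ}
    (H₀ V : Matrix (Fin d) (Fin d) ℂ) (hH : H₀.IsHermitian) (hV : V.IsHermitian)
    (E : Fin d → ℝ) (hsimple : ∀ m n, E m = E n → m = n)
    (v : Fin d → (Fin d → ℂ))
    (hortho : ∀ m n, star (v m) ⬝ᵥ v n = if m = n then 1 else 0)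
    (heig : ∀ n, H₀.mulVec (v n) = (E n : ℂ) • v n)
    (w : ℝ → Fin d → (Fin d → ℂ)) (ε : ℝ → Fin d → ℝ)
    (hw0 : ∀ n, w 0 n = v n) (hε0 : ∀ n, ε 0 n = E n)
    (hwnorm : ∀ t n, star (w t n) ⬝ᵥ w t n = 1)
    (hweig : ∀ (t : ℝ) (n : Fin d), (H₀ + (t : ℂ) • V).mulVec (w t n) = (ε t n : ℂ) • w t n)
    (hsmooth : ∀ n, ContDiff ℝ 2 (fun t => w t n))
    (β Z : ℝ)
    (S : ℝ → ℝ)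
    (hS : ∀ t, S t = (1 / Z ^ 2) * ∑ m, ∑ n,
        Real.exp (-β * E m) * Real.exp (-β * E n) * ‖star (v m) ⬝ᵥ w t n‖ ^ 2) :
    deriv S 0 = 0 ∧
    deriv (deriv S) 0 = -(1 / Z ^ 2) * ∑ m, ∑ n,
        (if m = n then 0 else
          (Real.exp (-β * E m) - Real.exp (-β * E n)) ^ 2
            * ‖star (v m) ⬝ᵥ V.mulVec (v n)‖ ^ 2 / (E m - E n) ^ 2) := by
  set K : Fin d → Fin d → ℝ := fun m n => ‖star (v m) ⬝ᵥ V *ᵥ v n‖ ^ 2 / (E m - E n) ^ 2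
  have hf : ∀ m n, ContDiff ℝ 2 (fun t => star (v m) ⬝ᵥ w t n) := fun m n => by
    have := hsmooth n
    simp only [dotProduct]
    fun_prop
  have hunit : ∀ n t, ∑ m, ‖star (v m) ⬝ᵥ w t n‖ ^ 2 = 1 := fun n t => by
    rw [sum_norm_sq_star_dotProduct hortho, hwnorm, RCLike.one_re]
  have h₀ : ∀ m n, m ≠ n → star (v m) ⬝ᵥ w 0 n = 0 := fun m n hmn => by
    simp [hw0, hortho, hmn]
  have hK : ∀ m n, K m n = K n m := fun m n => by
    simp only [K]
    rw [← hV.star_star_dotProduct_mulVec, norm_star, ← neg_sub (E m) (E n), neg_sq]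
  have hderiv : ∀ m n, m ≠ n → ‖deriv (fun t => star (v m) ⬝ᵥ w t n) 0‖ ^ 2 = K m n :=
    fun m n hmn => by
      rw [norm_sq_deriv_overlap_eq hH (heig m) ((hsmooth n).differentiable two_ne_zero)
        (hwnorm · n) (hweig · n) (h₀ m n hmn) (by rw [hε0]; exact fun h => hmn (hsimple m n h)),
        hε0, hw0]
  obtain ⟨h1, h2⟩ := deriv_sum_sum_mul_mul_norm_sq (1 / Z ^ 2) (fun n => Real.exp (-β * E n))
    hf hunit h₀ hK hderiv S hS
  refine ⟨h1, h2.trans ?_⟩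
  congr 1
  refine Finset.sum_congr rfl fun m _ => Finset.sum_congr rfl fun n _ => ?_
  split_ifs with hmn
  · simp [hmn]
  · exact (mul_div_assoc _ _ _).symm

theorem thermal_overlap_perturbation {d : ℕ}
    (H₀ V : Matrix (Fin d) (Fin d) ℂ) (hH : H₀.IsHermitian) (hV : V.IsHermitian)
    (E : Fin d → ℝ) (hsimple : ∀ m n, E m = E n → m = n)
    (v : Fin d → (Fin d → ℂ))
    (hortho : ∀ m n, star (v m) ⬝ᵥ v n = if m = n then 1 else 0)
    (heig : ∀ n, H₀.mulVec (v n) = (E n : ℂ) • v n)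
    (w : ℝ → Fin d → (Fin d → ℂ)) (ε : ℝ → Fin d → ℝ)
    (hw0 : ∀ n, w 0 n = v n) (hε0 : ∀ n, ε 0 n = E n)
    (hwnorm : ∀ t n, star (w t n) ⬝ᵥ w t n = 1)
    (hweig : ∀ (t : ℝ) (n : Fin d), (H₀ + (t : ℂ) • V).mulVec (w t n) = (ε t n : ℂ) • w t n)
    (hsmooth : ∀ n, ContDiff ℝ 2 (fun t => w t n))
    (β Z : ℝ) (hZ : Z = ∑ n, Real.exp (-β * E n))
    (S : ℝ → ℝ)
    (hS : ∀ t, S t = (1 / Z ^ 2) * ∑ m, ∑ n,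
        Real.exp (-β * E m) * Real.exp (-β * E n) * ‖star (v m) ⬝ᵥ w t n‖ ^ 2) :
    deriv S 0 = 0 ∧
    deriv (deriv S) 0 = -(1 / Z ^ 2) * ∑ m, ∑ n,
        (if m = n then 0 else
          (Real.exp (-β * E m) - Real.exp (-β * E n)) ^ 2
            * ‖star (v m) ⬝ᵥ V.mulVec (v n)‖ ^ 2 / (E m - E n) ^ 2) :=
  thermal_overlap_perturbation_general H₀ V hH hV E hsimple v hortho heig w ε hw0 hε0 hwnorm hweig
    hsmooth β Z S hS
end

section
/- In the periodic Ising chain with N spins (N ≥ 3), for the Gibbs weights at inverse temperature 2β with K = 2βJ, the classical sum S₁ := Σ_{s∈{±1}^N} e^{K Σᵢ sᵢs_{i+1}} · 1[s_N = s_2] · (1 − e^{−2K s₁s₂})² equals 8 sinh²K · ((2cosh K)^{N−2} + (2sinh K)^{N−2}). -/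
/-- spin value of a Boolean configuration variable: `true ↦ +1`, `false ↦ -1`. -/
def spin (b : Bool) : ℝ := if b then 1 else -1

/-!
When the two neighbours of site `0` agree, the bonds on both sides of site `0` carry the same
product `x = s₀s₁ = ±1`, so the weight factors as `e^{2Kx} (1 - e^{-2Kx})² = 4 sinh² K` times the
Boltzmann weight of the ring formed by the remaining `N - 1` sites with the last one identified
with the first, i.e. a closed chain of `N - 2` bonds. Summing over `s₀` gives a factor `2`, and
summing over closed chains gives `tr Tᴺ⁻²` for the transfer matrix `T_{ab} = e^{K a b}`, whose
eigenvalues are `2 cosh K` and `2 sinh K`.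
-/

open Finset Real

section PathSum

variable {α R : Type*} [Fintype α] [DecidableEq α] [CommSemiring R]

theorem sum_prod_path_mul_eq_sum_pow_apply (M : Matrix α α R) (m : ℕ) (F : α → α → R) :
    ∑ t : Fin (m + 1) → α, (∏ i : Fin m, M (t i.castSucc) (t i.succ)) * F (t 0) (t (Fin.last m))
      = ∑ a, ∑ b, (M ^ m) a b * F a b := by
  induction m generalizing F with
  | zero =>
    rw [← (Equiv.funUnique (Fin 1) α).symm.sum_comp]
    simp [Matrix.one_apply]
  | succ m ih =>
    rw [← (Fin.consEquiv fun _ => α).sum_comp, Fintype.sum_prod_type]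
    simp only [Fin.consEquiv_apply, Fin.prod_univ_succ, Fin.cons_zero, Fin.cons_succ,
      Fin.castSucc_zero, ← Fin.succ_castSucc, Fin.cons_last]
    refine sum_congr rfl fun a _ => ?_
    calc ∑ t : Fin (m + 1) → α,
          (M a (t 0) * ∏ i : Fin m, M (t i.castSucc) (t i.succ)) * F a (t (Fin.last m))
        = ∑ t : Fin (m + 1) → α,
          (∏ i : Fin m, M (t i.castSucc) (t i.succ)) * (M a (t 0) * F a (t (Fin.last m))) :=
          sum_congr rfl fun _ _ => by ring
      _ = ∑ c, ∑ b, (M ^ m) c b * (M a c * F a b) := ih fun c b => M a c * F a b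
      _ = ∑ b, (M ^ (m + 1)) a b * F a b := by
          simp only [pow_succ', Matrix.mul_apply, sum_mul]
          rw [sum_comm]
          exact sum_congr rfl fun _ _ => sum_congr rfl fun _ _ => by ring

theorem sum_closed_path_prod_eq_trace_pow (M : Matrix α α R) (m : ℕ) :
    ∑ t : Fin (m + 1) → α,
      (if t (Fin.last m) = t 0 then ∏ i : Fin m, M (t i.castSucc) (t i.succ) else 0)
      = (M ^ m).trace := by
  simpa [Matrix.trace] using
    sum_prod_path_mul_eq_sum_pow_apply M m fun a b => if b = a then 1 else 0

end PathSum

theorem Fin.sum_cons_cyclic {α β : Type*} [AddCommMonoid β] {m : ℕ} (g : α → α → β) (c : α)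
    (v : Fin (m + 1) → α) :
    ∑ i : Fin (m + 2),
        g (Fin.cons (α := fun _ => α) c v i) (Fin.cons (α := fun _ => α) c v (i + 1))
      = g c (v 0) + ∑ i : Fin m, g (v i.castSucc) (v i.succ) + g (v (Fin.last m)) c := by
  rw [Fin.sum_univ_castSucc]
  simp only [Fin.coeSucc_eq_succ, Fin.last_add_one]
  rw [Fin.sum_univ_succ]
  simp

noncomputable def transferMatrix (K : ℝ) : Matrix Bool Bool ℝ :=
  Matrix.of fun a b => exp (K * (spin a * spin b))

theorem transferMatrix_pow_apply (K : ℝ) (n : ℕ) (a b : Bool) :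
    (transferMatrix K ^ n) a b = ((2 * cosh K) ^ n + spin a * spin b * (2 * sinh K) ^ n) / 2 := by
  induction n generalizing a with
  | zero => cases a <;> cases b <;> simp [spin]
  | succ n ih =>
    rw [pow_succ', Matrix.mul_apply, Fintype.sum_bool, ih, ih]
    cases a <;> cases b <;> simp [transferMatrix, spin, cosh_eq, sinh_eq] <;> ring

theorem trace_transferMatrix_pow (K : ℝ) (n : ℕ) :
    (transferMatrix K ^ n).trace = (2 * cosh K) ^ n + (2 * sinh K) ^ n := by
  simp [Matrix.trace, transferMatrix_pow_apply, spin]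

theorem exp_two_mul_mul_one_sub_exp_neg_two_mul_sq (y : ℝ) :
    exp (2 * y) * (1 - exp (-(2 * y))) ^ 2 = 4 * sinh y ^ 2 := by
  have h : exp y * exp (-y) = 1 := by rw [← exp_add, add_neg_cancel, exp_zero]
  calc exp (2 * y) * (1 - exp (-(2 * y))) ^ 2 = (exp y * (1 - exp (-y) * exp (-y))) ^ 2 := by
        rw [show 2 * y = y + y by ring, neg_add, exp_add, exp_add]; ring
    _ = (exp y - exp (-y)) ^ 2 := by congr 1; linear_combination -exp (-y) * h
    _ = 4 * sinh y ^ 2 := by rw [sinh_eq]; ring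

theorem sinh_mul_spin_mul_spin_sq (K : ℝ) (a b : Bool) :
    sinh (K * (spin a * spin b)) ^ 2 = sinh K ^ 2 := by
  cases a <;> cases b <;> simp [spin]

theorem exp_mul_sum_spin_cons_mul_sq (K : ℝ) {m : ℕ} (c : Bool) (v : Fin (m + 1) → Bool)
    (hv : v (Fin.last m) = v 0) :
    exp (K * ∑ i : Fin (m + 2), spin (Fin.cons (α := fun _ => Bool) c v i)
          * spin (Fin.cons (α := fun _ => Bool) c v (i + 1)))
        * (1 - exp (-(2 * K) * spin c * spin (v 0))) ^ 2
      = 4 * sinh K ^ 2 * ∏ i : Fin m, transferMatrix K (v i.castSucc) (v i.succ) := by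
  set y := K * (spin c * spin (v 0))
  have hsplit : K * (spin c * spin (v 0) + ∑ i : Fin m, spin (v i.castSucc) * spin (v i.succ)
      + spin (v 0) * spin c)
        = 2 * y + ∑ i : Fin m, K * (spin (v i.castSucc) * spin (v i.succ)) := by
    rw [← mul_sum]; ring
  rw [Fin.sum_cons_cyclic (fun a b => spin a * spin b), hv, hsplit, exp_add, exp_sum,
    show -(2 * K) * spin c * spin (v 0) = -(2 * y) by ring, mul_right_comm,
    exp_two_mul_mul_one_sub_exp_neg_two_mul_sq, sinh_mul_spin_mul_spin_sq]
  rfl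

theorem tfic_classical_sum (N : ℕ) [NeZero N] (hN : 3 ≤ N) (K : ℝ) :
    ∑ s : Fin N → Bool,
        (if s ((0 : Fin N) - 1) = s 1 then
          Real.exp (K * ∑ i : Fin N, spin (s i) * spin (s (i + 1)))
            * (1 - Real.exp (-(2 * K) * spin (s 0) * spin (s 1))) ^ 2
        else 0)
      = 8 * Real.sinh K ^ 2
          * ((2 * Real.cosh K) ^ (N - 2) + (2 * Real.sinh K) ^ (N - 2)) := by
  obtain ⟨n, rfl⟩ : ∃ n, N = n + 3 := ⟨N - 3, by omega⟩
  have hlast : (0 : Fin (n + 3)) - 1 = Fin.last (n + 2) := by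
    rw [sub_eq_iff_eq_add, Fin.last_add_one]
  rw [← (Fin.consEquiv fun _ => Bool).sum_comp, Fintype.sum_prod_type]
  calc _ = ∑ _c : Bool, ∑ v : Fin (n + 2) → Bool, 4 * sinh K ^ 2 *
        if v (Fin.last (n + 1)) = v 0 then
          ∏ i : Fin (n + 1), transferMatrix K (v i.castSucc) (v i.succ) else 0 := by
        refine sum_congr rfl fun c _ => sum_congr rfl fun v _ => ?_
        simp only [Fin.consEquiv_apply, hlast, Fin.cons_last, Fin.cons_one, Fin.cons_zero]
        split_ifs with hv
        · exact exp_mul_sum_spin_cons_mul_sq K c v hv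
        · rw [mul_zero]
    _ = 8 * sinh K ^ 2 * (transferMatrix K ^ (n + 1)).trace := by
        simp only [← mul_sum, sum_closed_path_prod_eq_trace_pow, sum_const, card_univ,
          Fintype.card_bool, nsmul_eq_mul]
        ring
    _ = _ := by rw [trace_transferMatrix_pow]; rfl
end
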